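/- Let Γ₁ be an n×m₁ contraction and Γ₂ an n×m₂ contraction, and let T = [Γ₁, D_{Γ₁ᴴ}Γ₂] be the associated row contraction. Then the squared defect operator of T factorizes as I − TᴴT = [[D_{Γ₁}, 0],[−Γ₂ᴴΓ₁, D_{Γ₂}]] · [[D_{Γ₁}, −Γ₁ᴴΓ₂],[0, D_{Γ₂}]], where D_{Γᵢ} = (I − ΓᵢᴴΓᵢ)^{1/2} and D_{Γ₁ᴴ} = (I − Γ₁Γ₁ᴴ)^{1/2}. -/

import Mathlib

open scoped Matrix Matrix.Norms.L2Operator ComplexOrder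

/-- The unique positive semidefinite square root of a matrix, extended by `0` to matrices that
are not positive semidefinite. -/
noncomputable def psdSqrt {m : ℕ} (A : Matrix (Fin m) (Fin m) ℂ) : Matrix (Fin m) (Fin m) ℂ :=
  letI := Classical.dec A.PosSemidef
  if h : A.PosSemidef then
    (h.1.eigenvectorUnitary : Matrix (Fin m) (Fin m) ℂ) *
      Matrix.diagonal ((↑) ∘ Real.sqrt ∘ h.1.eigenvalues) *
      (star h.1.eigenvectorUnitary : Matrix (Fin m) (Fin m) ℂ)
  else 0

/-!
Contractivity enters only through positivity of `1 - ΓᴴΓ` and `1 - ΓΓᴴ` (by the C⋆-identity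
`‖ΓᴴΓ‖ = ‖Γ‖²`), so that the defect operators are genuine square roots. The one non-formal input
is the intertwining relation `Γ₁ᴴ D_{Γ₁ᴴ} = D_{Γ₁} Γ₁ᴴ`: it follows from
`Γ₁ᴴ (1 - Γ₁Γ₁ᴴ) = (1 - Γ₁ᴴΓ₁) Γ₁ᴴ`, because on the finite set `σ(Γ₁Γ₁ᴴ) ∪ σ(Γ₁ᴴΓ₁)` the square
root agrees with a polynomial, and polynomials in intertwined matrices are intertwined. The
factorization is then a block-by-block computation.
-/

open Polynomial MatrixOrder

namespace Matrix

variable {m n : Type*} [Fintype m] [Fintype n]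

theorem mul_pow_eq_pow_mul_of_mul_eq [DecidableEq m] [DecidableEq n] {α : Type*} [Semiring α]
    {A : Matrix n n α} {B : Matrix m m α} {X : Matrix m n α} (h : X * A = B * X) (k : ℕ) :
    X * A ^ k = B ^ k * X := by
  induction k with
  | zero => simp
  | succ k ih =>
    rw [pow_succ, ← Matrix.mul_assoc, ih, Matrix.mul_assoc, h, ← Matrix.mul_assoc, ← pow_succ]

theorem mul_aeval_eq_aeval_mul_of_mul_eq [DecidableEq m] [DecidableEq n] {R α : Type*}
    [CommSemiring R] [Semiring α] [Algebra R α] {A : Matrix n n α} {B : Matrix m m α}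
    {X : Matrix m n α} (h : X * A = B * X) (p : R[X]) :
    X * aeval A p = aeval B p * X := by
  simp only [aeval_eq_sum_range, Matrix.mul_sum, Matrix.sum_mul, Matrix.mul_smul, Matrix.smul_mul,
    mul_pow_eq_pow_mul_of_mul_eq h]

theorem mul_cfc_eq_cfc_mul_of_mul_eq [DecidableEq m] [DecidableEq n] {𝕜 : Type*} [RCLike 𝕜]
    {A : Matrix n n 𝕜} {B : Matrix m m 𝕜} {X : Matrix m n 𝕜} (hA : A.IsHermitian)
    (hB : B.IsHermitian) (h : X * A = B * X) (f : ℝ → ℝ) : X * cfc f A = cfc f B * X := by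
  classical
  set s := (finite_real_spectrum (A := A)).toFinset ∪ (finite_real_spectrum (A := B)).toFinset
  set p := Lagrange.interpolate s id f
  have hp : ∀ x ∈ s, p.eval x = f x := fun x hx =>
    Lagrange.eval_interpolate_at_node f (Set.injOn_id _) hx
  have hfA : cfc f A = aeval A p := by
    rw [← cfc_polynomial p A hA.isSelfAdjoint]
    exact cfc_congr fun x hx => (hp x (by simp [s, hx])).symm
  have hfB : cfc f B = aeval B p := by
    rw [← cfc_polynomial p B hB.isSelfAdjoint]
    exact cfc_congr fun x hx => (hp x (by simp [s, hx])).symm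
  rw [hfA, hfB, mul_aeval_eq_aeval_mul_of_mul_eq h]

theorem posSemidef_one_sub_conjTranspose_mul_self_of_norm_le_one [DecidableEq n]
    {Γ : Matrix m n ℂ} (hΓ : ‖Γ‖ ≤ 1) : (1 - Γᴴ * Γ).PosSemidef := by
  have hnorm : ‖Γᴴ * Γ‖ ≤ 1 := by
    rw [l2_opNorm_conjTranspose_mul_self]
    exact mul_le_one₀ hΓ (norm_nonneg _) hΓ
  exact (CStarAlgebra.norm_le_one_iff_of_nonneg _
    (posSemidef_conjTranspose_mul_self Γ).nonneg).1 hnorm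

theorem posSemidef_one_sub_self_mul_conjTranspose_of_norm_le_one [DecidableEq m] [DecidableEq n]
    {Γ : Matrix m n ℂ} (hΓ : ‖Γ‖ ≤ 1) : (1 - Γ * Γᴴ).PosSemidef := by
  simpa using posSemidef_one_sub_conjTranspose_mul_self_of_norm_le_one
    (Γ := Γᴴ) (by rwa [l2_opNorm_conjTranspose])

end Matrix

theorem psdSqrt_eq_cfc {n : ℕ} {A : Matrix (Fin n) (Fin n) ℂ} (hA : A.PosSemidef) :
    psdSqrt A = cfc Real.sqrt A := by
  rw [psdSqrt, dif_pos hA, hA.1.cfc_eq, Matrix.IsHermitian.cfc, Unitary.conjStarAlgAut_apply]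
  rfl

theorem psdSqrt_mul_self {n : ℕ} {A : Matrix (Fin n) (Fin n) ℂ} (hA : A.PosSemidef) :
    psdSqrt A * psdSqrt A = A := by
  calc psdSqrt A * psdSqrt A = cfc (fun x => √x * √x) A := by rw [psdSqrt_eq_cfc hA, cfc_mul ..]
    _ = cfc id A := cfc_congr fun x hx =>
      Real.mul_self_sqrt (spectrum_nonneg_of_nonneg hA.nonneg hx)
    _ = A := cfc_id ℝ A

theorem isHermitian_psdSqrt {n : ℕ} (A : Matrix (Fin n) (Fin n) ℂ) : (psdSqrt A).IsHermitian := by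
  by_cases hA : A.PosSemidef
  · rw [psdSqrt_eq_cfc hA]
    exact cfc_predicate Real.sqrt A
  · rw [psdSqrt, dif_neg hA]
    exact Matrix.isHermitian_zero

theorem mul_psdSqrt_eq_psdSqrt_mul_of_mul_eq {k l : ℕ} {A : Matrix (Fin k) (Fin k) ℂ}
    {B : Matrix (Fin l) (Fin l) ℂ} {X : Matrix (Fin l) (Fin k) ℂ} (hA : A.PosSemidef)
    (hB : B.PosSemidef) (h : X * A = B * X) : X * psdSqrt A = psdSqrt B * X := by
  rw [psdSqrt_eq_cfc hA, psdSqrt_eq_cfc hB, Matrix.mul_cfc_eq_cfc_mul_of_mul_eq hA.1 hB.1 h]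

theorem conjTranspose_mul_psdSqrt_one_sub_self_mul_conjTranspose {k l : ℕ}
    {Γ : Matrix (Fin k) (Fin l) ℂ} (hΓ : ‖Γ‖ ≤ 1) :
    Γᴴ * psdSqrt (1 - Γ * Γᴴ) = psdSqrt (1 - Γᴴ * Γ) * Γᴴ :=
  mul_psdSqrt_eq_psdSqrt_mul_of_mul_eq
    (Matrix.posSemidef_one_sub_self_mul_conjTranspose_of_norm_le_one hΓ)
    (Matrix.posSemidef_one_sub_conjTranspose_mul_self_of_norm_le_one hΓ)
    (by simp only [Matrix.mul_sub, Matrix.sub_mul, Matrix.mul_one, Matrix.one_mul,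
      Matrix.mul_assoc])

theorem Matrix.one_sub_conjTranspose_mul_self_fromCols {α : Type*} [CommRing α] [StarRing α]
    {n m₁ m₂ : Type*} [Fintype n] [Fintype m₁] [Fintype m₂] [DecidableEq n] [DecidableEq m₁]
    [DecidableEq m₂] {Γ₁ : Matrix n m₁ α} {Γ₂ : Matrix n m₂ α} {D₁ : Matrix m₁ m₁ α}
    {D₂ : Matrix m₂ m₂ α} {D : Matrix n n α} (hD₁ : D₁ * D₁ = 1 - Γ₁ᴴ * Γ₁)
    (hD₂ : D₂ * D₂ = 1 - Γ₂ᴴ * Γ₂) (hD : D * D = 1 - Γ₁ * Γ₁ᴴ) (hD₁H : D₁ᴴ = D₁) (hDH : Dᴴ = D)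
    (hΓ₁D : Γ₁ᴴ * D = D₁ * Γ₁ᴴ) :
    1 - (fromCols Γ₁ (D * Γ₂))ᴴ * fromCols Γ₁ (D * Γ₂) =
      fromBlocks D₁ 0 (-(Γ₂ᴴ * Γ₁)) D₂ * fromBlocks D₁ (-(Γ₁ᴴ * Γ₂)) 0 D₂ := by
  have hDΓ₁ : D * Γ₁ = Γ₁ * D₁ := by
    simpa only [conjTranspose_mul, conjTranspose_conjTranspose, hD₁H, hDH] using
      congrArg conjTranspose hΓ₁D
  rw [conjTranspose_fromCols_eq_fromRows_conjTranspose, fromRows_mul_fromCols, fromBlocks_multiply,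
    ← fromBlocks_one, sub_eq_add_neg, fromBlocks_neg, fromBlocks_add]
  congr 1
  · rw [hD₁]; simp [sub_eq_add_neg]
  · rw [← Matrix.mul_assoc, hΓ₁D]; simp [Matrix.mul_assoc]
  · rw [conjTranspose_mul, hDH, Matrix.mul_assoc, hDΓ₁]; simp [Matrix.mul_assoc]
  · rw [conjTranspose_mul, hDH, Matrix.mul_assoc, ← Matrix.mul_assoc D, hD, hD₂]
    simp only [Matrix.sub_mul, Matrix.mul_sub, Matrix.one_mul, Matrix.neg_mul, Matrix.mul_neg,
      neg_neg, Matrix.mul_assoc]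
    abel

/-- **Factorization of the squared defect operator of a row contraction.** For contractions
`Γ₁`, `Γ₂` and the row contraction `T = [Γ₁, D_{Γ₁ᴴ}Γ₂]`, one has
`I − TᴴT = [[D_{Γ₁}, 0],[−Γ₂ᴴΓ₁, D_{Γ₂}]] ⬝ [[D_{Γ₁}, −Γ₁ᴴΓ₂],[0, D_{Γ₂}]]`. -/
theorem defect_sq_of_rowContraction
    {n m₁ m₂ : ℕ} (Γ₁ : Matrix (Fin n) (Fin m₁) ℂ) (Γ₂ : Matrix (Fin n) (Fin m₂) ℂ)
    (hΓ₁ : ‖Γ₁‖ ≤ 1) (hΓ₂ : ‖Γ₂‖ ≤ 1)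
    (T : Matrix (Fin n) (Fin m₁ ⊕ Fin m₂) ℂ)
    (hT : T = Matrix.fromCols Γ₁ (psdSqrt (1 - Γ₁ * Γ₁ᴴ) * Γ₂)) :
    1 - Tᴴ * T =
      Matrix.fromBlocks (psdSqrt (1 - Γ₁ᴴ * Γ₁)) 0
          (-(Γ₂ᴴ * Γ₁)) (psdSqrt (1 - Γ₂ᴴ * Γ₂)) *
        Matrix.fromBlocks (psdSqrt (1 - Γ₁ᴴ * Γ₁)) (-(Γ₁ᴴ * Γ₂))
          0 (psdSqrt (1 - Γ₂ᴴ * Γ₂)) := by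
  subst hT
  exact Matrix.one_sub_conjTranspose_mul_self_fromCols
    (psdSqrt_mul_self (Matrix.posSemidef_one_sub_conjTranspose_mul_self_of_norm_le_one hΓ₁))
    (psdSqrt_mul_self (Matrix.posSemidef_one_sub_conjTranspose_mul_self_of_norm_le_one hΓ₂))
    (psdSqrt_mul_self (Matrix.posSemidef_one_sub_self_mul_conjTranspose_of_norm_le_one hΓ₁))
    (isHermitian_psdSqrt _) (isHermitian_psdSqrt _)
    (conjTranspose_mul_psdSqrt_one_sub_self_mul_conjTranspose hΓ₁)
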